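/- Let G be an invertible symmetric 4×4 real matrix, u ∈ ℝ⁴ with uᵀGu = -1, κ, σ ∈ ℝ with κ ≠ 0, and ξ ∈ ℝ⁴. With P = G + (Gu)(Gu)ᵀ and M(ξ) the 5×5 principal symbol matrix (entries M(ξ)₀₀ = κ²(ξᵀu), M(ξ)₀,(1+β) = M(ξ)_(1+β),0 = σκ·(P G⁻¹ ξ)_β, M(ξ)_(1+α),(1+β) = (ξᵀu)·(G + 2(Gu)(Gu)ᵀ)_{αβ}), one has det M(ξ) = 0 if and only if ξᵀu = 0 or (ξᵀu)² = σ² · ξᵀ G⁻¹ P G⁻¹ ξ. -/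

import Mathlib

/-!
With `K = G⁻¹` and `E = -(Gu)uᵀ`, the normalisation `uᵀGu = -1` makes `E` idempotent, so
`PK = 1 - E` is a projection and `ΓK = 1 - 2E` an involution; hence `Γ⁻¹ = KΓK` and
`(PK)ᵀ Γ⁻¹ (PK) = KPK`. If `ξᵀu = 0` the lower right `4 × 4` block of `M(ξ)` vanishes and
`M(ξ)` has a kernel vector. Otherwise that block `(ξᵀu) Γ` is invertible, and its Schur complement
is `κ² (ξᵀu)⁻¹ ((ξᵀu)² - σ² ξᵀKPKξ)`.
-/

open Matrix

namespace IsIdempotentElem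
variable {R : Type*} [Ring R] {e : R}

lemma one_sub_two_mul_mul_self (h : IsIdempotentElem e) : (1 - 2 * e) * (1 - 2 * e) = 1 := by
  simp only [two_mul, mul_sub, sub_mul, mul_add, add_mul, one_mul, mul_one, h.eq]
  abel

lemma one_sub_mul_one_sub_two_mul (h : IsIdempotentElem e) : (1 - e) * (1 - 2 * e) = 1 - e := by
  simp only [two_mul, mul_sub, sub_mul, mul_add, one_mul, mul_one, h.eq]
  abel

end IsIdempotentElem

namespace Matrix

section Bordered
variable {K : Type*} [Field K] {n : ℕ}

lemma det_eq_zero_of_submatrix_succ_eq_zero (hn : 1 < n)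
    (M : Matrix (Fin (n + 1)) (Fin (n + 1)) K) (h : ∀ i j : Fin n, M i.succ j.succ = 0) :
    M.det = 0 := by
  obtain ⟨y, hy, hby⟩ : ∃ y : Fin n → K, y ≠ 0 ∧ (fun j : Fin n => M 0 j.succ) ⬝ᵥ y = 0 := by
    have hker := LinearMap.ker_ne_bot_of_finrank_lt
      (f := mulVecLin (replicateRow (Fin 1) fun j : Fin n => M 0 j.succ)) (by simpa using hn)
    obtain ⟨y, hy, hy0⟩ := (Submodule.ne_bot_iff _).mp hker
    exact ⟨y, hy0, congrFun hy 0⟩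
  refine exists_mulVec_eq_zero_iff.mp ⟨Fin.cons 0 y, fun h0 => hy ?_, ?_⟩
  · funext j
    simpa using congrFun h0 j.succ
  · ext i
    refine Fin.cases ?_ (fun i => ?_) i <;>
      simp [mulVec, dotProduct, Fin.sum_univ_succ, h] at hby ⊢
    exact hby

lemma det_eq_det_submatrix_succ_mul (M : Matrix (Fin (n + 1)) (Fin (n + 1)) K)
    (hD : IsUnit (M.submatrix Fin.succ Fin.succ).det) :
    M.det = (M.submatrix Fin.succ Fin.succ).det *
      (M 0 0 - (fun j => M 0 j.succ) ⬝ᵥ (M.submatrix Fin.succ Fin.succ)⁻¹ *ᵥ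
        fun i => M i.succ 0) := by
  set D := M.submatrix Fin.succ Fin.succ
  have := D.invertibleOfIsUnitDet hD
  let e : Fin 1 ⊕ Fin n ≃ Fin (n + 1) := finSumFinEquiv.trans (finCongr (add_comm 1 n))
  have he₀ : ∀ i, e (.inl i) = 0 := fun i => by ext; simp [e]
  have he : ∀ i, e (.inr i) = i.succ := fun i => by ext; simp [e]
  have hblocks : M.submatrix e e = fromBlocks (of fun _ _ => M 0 0)
      (replicateRow _ fun j => M 0 j.succ) (replicateCol _ fun i => M i.succ 0) D := by
    ext (i | i) (j | j) <;> simp [he₀, he, D]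
  rw [← det_submatrix_equiv_self e, hblocks, det_fromBlocks₂₂, det_fin_one, invOf_eq_nonsing_inv,
    Matrix.mul_assoc, ← replicateCol_mulVec, sub_apply, replicateRow_mul_replicateCol_apply,
    of_apply]

end Bordered

variable {ι R : Type*} [Fintype ι] [CommRing R]

lemma isIdempotentElem_vecMulVec {a b : ι → R} (h : b ⬝ᵥ a = 1) :
    IsIdempotentElem (vecMulVec a b) := by
  rw [IsIdempotentElem, vecMulVec_mul_vecMulVec, h, one_smul]

lemma isIdempotentElem_vecMulVec_neg_mulVec {G : Matrix ι ι R} {u : ι → R}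
    (hu : u ⬝ᵥ G *ᵥ u = -1) : IsIdempotentElem (vecMulVec (-(G *ᵥ u)) u) :=
  isIdempotentElem_vecMulVec (by rw [dotProduct_neg, hu, neg_neg])

lemma mulVec_dotProduct_mulVec_mulVec (A N : Matrix ι ι R) (ξ : ι → R) :
    A *ᵥ ξ ⬝ᵥ N *ᵥ (A *ᵥ ξ) = ξ ⬝ᵥ (Aᵀ * N * A) *ᵥ ξ := by
  rw [mulVec_mulVec, dotProduct_mulVec, ← vecMul_transpose, vecMul_vecMul, ← dotProduct_mulVec,
    Matrix.mul_assoc]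

end Matrix

section RestFrame
variable {ι R : Type*} [Fintype ι] [CommRing R]

def restProjForm (G : Matrix ι ι R) (u : ι → R) : Matrix ι ι R :=
  G + vecMulVec (G *ᵥ u) (G *ᵥ u)

def reflectionForm (G : Matrix ι ι R) (u : ι → R) : Matrix ι ι R :=
  G + (2 : R) • vecMulVec (G *ᵥ u) (G *ᵥ u)

variable [DecidableEq ι] {G : Matrix ι ι R} {u : ι → R}

lemma vecMulVec_mulVec_mul_inv (hG : G.IsSymm) (hGinv : IsUnit G.det) :
    vecMulVec (G *ᵥ u) (G *ᵥ u) * G⁻¹ = vecMulVec (G *ᵥ u) u := by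
  rw [vecMulVec_mul, ← mulVec_transpose, hG.inv.eq, mulVec_mulVec, nonsing_inv_mul _ hGinv,
    one_mulVec]

lemma restProjForm_mul_inv (hG : G.IsSymm) (hGinv : IsUnit G.det) :
    restProjForm G u * G⁻¹ = 1 - vecMulVec (-(G *ᵥ u)) u := by
  rw [restProjForm, add_mul, mul_nonsing_inv _ hGinv, vecMulVec_mulVec_mul_inv hG hGinv,
    neg_vecMulVec, sub_neg_eq_add]

lemma reflectionForm_mul_inv (hG : G.IsSymm) (hGinv : IsUnit G.det) :
    reflectionForm G u * G⁻¹ = 1 - 2 * vecMulVec (-(G *ᵥ u)) u := by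
  rw [reflectionForm, add_mul, mul_nonsing_inv _ hGinv, smul_mul_assoc,
    vecMulVec_mulVec_mul_inv hG hGinv, neg_vecMulVec, two_smul, two_mul]
  abel

lemma reflectionForm_mul_inv_mul_reflectionForm_mul_inv (hG : G.IsSymm) (hGinv : IsUnit G.det)
    (hu : u ⬝ᵥ G *ᵥ u = -1) : reflectionForm G u * (G⁻¹ * reflectionForm G u * G⁻¹) = 1 := by
  rw [← Matrix.mul_assoc, ← Matrix.mul_assoc, reflectionForm_mul_inv hG hGinv, Matrix.mul_assoc,
    reflectionForm_mul_inv hG hGinv,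
    (isIdempotentElem_vecMulVec_neg_mulVec hu).one_sub_two_mul_mul_self]

lemma inv_reflectionForm (hG : G.IsSymm) (hGinv : IsUnit G.det) (hu : u ⬝ᵥ G *ᵥ u = -1) :
    (reflectionForm G u)⁻¹ = G⁻¹ * reflectionForm G u * G⁻¹ :=
  inv_eq_right_inv (reflectionForm_mul_inv_mul_reflectionForm_mul_inv hG hGinv hu)

lemma isUnit_det_reflectionForm (hG : G.IsSymm) (hGinv : IsUnit G.det) (hu : u ⬝ᵥ G *ᵥ u = -1) :
    IsUnit (reflectionForm G u).det :=
  isUnit_det_of_right_inverse (reflectionForm_mul_inv_mul_reflectionForm_mul_inv hG hGinv hu)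

lemma restProjForm_mulVec_dotProduct_inv_reflectionForm (hG : G.IsSymm) (hGinv : IsUnit G.det)
    (hu : u ⬝ᵥ G *ᵥ u = -1) (ξ : ι → R) :
    (restProjForm G u * G⁻¹) *ᵥ ξ ⬝ᵥ (reflectionForm G u)⁻¹ *ᵥ ((restProjForm G u * G⁻¹) *ᵥ ξ) =
      ξ ⬝ᵥ (G⁻¹ * restProjForm G u * G⁻¹) *ᵥ ξ := by
  have hPT : (restProjForm G u * G⁻¹)ᵀ = G⁻¹ * restProjForm G u := by
    rw [transpose_mul, hG.inv.eq, restProjForm, transpose_add, hG.eq, transpose_vecMulVec]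
  have hE := isIdempotentElem_vecMulVec_neg_mulVec hu
  have hsandwich : G⁻¹ * restProjForm G u * (G⁻¹ * reflectionForm G u * G⁻¹) *
      (restProjForm G u * G⁻¹) = G⁻¹ * restProjForm G u * G⁻¹ :=
    calc _ = G⁻¹ * ((restProjForm G u * G⁻¹) * (reflectionForm G u * G⁻¹) *
          (restProjForm G u * G⁻¹)) := by simp only [Matrix.mul_assoc]
      _ = _ := by
        rw [restProjForm_mul_inv hG hGinv, reflectionForm_mul_inv hG hGinv,
          hE.one_sub_mul_one_sub_two_mul, hE.one_sub.eq, ← restProjForm_mul_inv hG hGinv,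
          Matrix.mul_assoc]
  rw [mulVec_dotProduct_mulVec_mulVec, hPT, inv_reflectionForm hG hGinv hu, hsandwich]

end RestFrame

/-- Characteristic covectors of the relativistic Euler system: for `κ ≠ 0`,
`det M(ξ) = 0` iff `ξᵀu = 0` (the rest hyperplane) or
`(ξᵀu)² = σ² ξᵀG⁻¹PG⁻¹ξ` (the sound cone). -/
theorem stmt3 (G : Matrix (Fin 4) (Fin 4) ℝ) (hG : G.IsSymm) (hGinv : IsUnit G.det)
    (u : Fin 4 → ℝ) (hu : u ⬝ᵥ G.mulVec u = -1)
    (κ σ : ℝ) (hκ : κ ≠ 0) (ξ : Fin 4 → ℝ)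
    (M : Matrix (Fin 5) (Fin 5) ℝ)
    (hM00 : M 0 0 = κ ^ 2 * (ξ ⬝ᵥ u))
    (hM0r : ∀ β : Fin 4,
      M 0 β.succ =
        σ * κ * ((G + vecMulVec (G.mulVec u) (G.mulVec u)) * G⁻¹).mulVec ξ β)
    (hMc0 : ∀ β : Fin 4,
      M β.succ 0 =
        σ * κ * ((G + vecMulVec (G.mulVec u) (G.mulVec u)) * G⁻¹).mulVec ξ β)
    (hMrc : ∀ α β : Fin 4,
      M α.succ β.succ =
        (ξ ⬝ᵥ u) * (G + (2 : ℝ) • vecMulVec (G.mulVec u) (G.mulVec u)) α β) :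
    M.det = 0 ↔
      ξ ⬝ᵥ u = 0 ∨
        (ξ ⬝ᵥ u) ^ 2 =
          σ ^ 2 *
            (ξ ⬝ᵥ (G⁻¹ * (G + vecMulVec (G.mulVec u) (G.mulVec u)) * G⁻¹).mulVec ξ) := by
  set t := ξ ⬝ᵥ u
  rcases eq_or_ne t 0 with ht | ht
  · refine iff_of_true (det_eq_zero_of_submatrix_succ_eq_zero (by norm_num) M fun i j => ?_)
      (Or.inl ht)
    rw [hMrc, ht, zero_mul]
  have := invertibleOfNonzero ht
  have hblock : M.submatrix Fin.succ Fin.succ = t • reflectionForm G u := by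
    ext i j; simp [hMrc, reflectionForm]
  have hrow : (fun j : Fin 4 => M 0 j.succ) = (σ * κ) • ((restProjForm G u * G⁻¹) *ᵥ ξ) := by
    ext j; simp [hM0r, restProjForm]
  have hcol : (fun i : Fin 4 => M i.succ 0) = (σ * κ) • ((restProjForm G u * G⁻¹) *ᵥ ξ) := by
    ext i; simp [hMc0, restProjForm]
  have hDunit : IsUnit (t • reflectionForm G u).det := by
    rw [det_smul]; exact (ht.isUnit.pow _).mul (isUnit_det_reflectionForm hG hGinv hu)
  rw [det_eq_det_submatrix_succ_mul M (hblock ▸ hDunit), hblock, hrow, hcol, hM00,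
    Matrix.inv_smul _ t (isUnit_det_reflectionForm hG hGinv hu), invOf_eq_inv]
  simp only [smul_mulVec, mulVec_smul, dotProduct_smul, smul_dotProduct, smul_eq_mul,
    restProjForm_mulVec_dotProduct_inv_reflectionForm hG hGinv hu]
  have hfactor : ∀ q : ℝ, κ ^ 2 * t - σ * κ * (t⁻¹ * (σ * κ * q)) =
      κ ^ 2 * t⁻¹ * (t ^ 2 - σ ^ 2 * q) := fun q => by field_simp
  rw [mul_eq_zero, or_iff_right hDunit.ne_zero, or_iff_right ht, hfactor, mul_eq_zero,
    or_iff_right (by positivity), sub_eq_zero]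
  rfl
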